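/- In the labeled cons-free system, if s is B-safe and s →*_{R_lab} t with t a data term, then there is a semi-outermost reduction from s to t. -/

import Mathlib

/-! # Applicative term rewriting systems (ATRSs) -/

/-- Simple types over a countable set of sorts. -/
inductive Ty where
  | base : ℕ → Ty
  | arrow : Ty → Ty → Ty

/-- Type order: sorts have order 0, `σ ⇒ τ` has order `max (order σ + 1) (order τ)`. -/
def Ty.order : Ty → ℕ
  | .base _ => 0
  | .arrow σ τ => max (σ.order + 1) τ.order

/-- Applicative terms over a set `α` of function symbols, with variables `ℕ`. -/
inductive Tm (α : Type) where
  | sym : α → Tm α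
  | var : ℕ → Tm α
  | app : Tm α → Tm α → Tm α

mutual
  /-- Strict subterm: `t` is a strict subterm of `s₁ s₂` if it is a strict
  subterm of `s₁` or a subterm of `s₂` (heads of applications are not subterms). -/
  inductive StrSubtm {α : Type} : Tm α → Tm α → Prop where
    | left {t s u : Tm α} : StrSubtm t s → StrSubtm t (Tm.app s u)
    | right {t s u : Tm α} : Subtm t u → StrSubtm t (Tm.app s u)
  /-- Subterm: `t ⊴ s` iff `t = s` or `t` is a strict subterm of `s`. -/
  inductive Subtm {α : Type} : Tm α → Tm α → Prop where
    | refl (s : Tm α) : Subtm s s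
    | strict {t s : Tm α} : StrSubtm t s → Subtm t s
end

/-- A signature: which symbols are constructors, their types, and variable types. -/
structure Sig (α : Type) where
  Cons : α → Prop
  typeOf : α → Ty
  varTy : ℕ → Ty

/-- Typing judgement for applicative terms. -/
inductive HasTy {α : Type} (S : Sig α) : Tm α → Ty → Prop where
  | sym (f : α) : HasTy S (.sym f) (S.typeOf f)
  | var (x : ℕ) : HasTy S (.var x) (S.varTy x)
  | app {s t : Tm α} {σ τ : Ty} :
      HasTy S s (.arrow σ τ) → HasTy S t σ → HasTy S (.app s t) τ

mutual
  /-- Patterns: a variable, or a constructor fully applied (to base type) to patterns. -/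
  inductive Pat {α : Type} (S : Sig α) : Tm α → Prop where
    | var (x : ℕ) : Pat S (.var x)
    | cons {s : Tm α} : PatSpine S s → (∃ i, HasTy S s (.base i)) → Pat S s
  /-- A constructor applied to a (possibly incomplete) list of patterns. -/
  inductive PatSpine {α : Type} (S : Sig α) : Tm α → Prop where
    | head {f : α} : S.Cons f → PatSpine S (.sym f)
    | app {s t : Tm α} : PatSpine S s → Pat S t → PatSpine S (.app s t)
end

/-- Ground terms: terms without variables. -/
def Tm.ground {α : Type} : Tm α → Prop
  | .sym _ => True
  | .var _ => False
  | .app s t => s.ground ∧ t.ground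

/-- Data terms: ground patterns. -/
def IsData {α : Type} (S : Sig α) (s : Tm α) : Prop := Pat S s ∧ s.ground

/-- The set of variables of a term. -/
def Tm.vars {α : Type} : Tm α → Set ℕ
  | .sym _ => ∅
  | .var x => {x}
  | .app s t => s.vars ∪ t.vars

/-- Number of occurrences of variable `x` in a term. -/
def Tm.count {α : Type} (x : ℕ) : Tm α → ℕ
  | .sym _ => 0
  | .var y => if y = x then 1 else 0
  | .app s t => Tm.count x s + Tm.count x t

/-- Applying a substitution to a term. -/
def subst {α : Type} (γ : ℕ → Tm α) : Tm α → Tm α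
  | .sym f => .sym f
  | .var x => γ x
  | .app s t => .app (subst γ s) (subst γ t)

/-- A rewrite rule. -/
structure Rule (α : Type) where
  lhs : Tm α
  rhs : Tm α

/-- Left-hand side shape of a constructor rule:
a defined symbol applied to patterns. -/
inductive LhsSpine {α : Type} (S : Sig α) : Tm α → Prop where
  | head {f : α} : ¬ S.Cons f → LhsSpine S (.sym f)
  | app {s t : Tm α} : LhsSpine S s → Pat S t → LhsSpine S (.app s t)

/-- The head symbol of a term, if any. -/
def Tm.headSym {α : Type} : Tm α → Option α
  | .sym f => some f
  | .var _ => none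
  | .app s _ => s.headSym

/-- `t` has the form `c t₁ ⋯ t_m` with `c` a constructor. -/
def ConsHead {α : Type} (S : Sig α) (t : Tm α) : Prop :=
  ∃ f, t.headSym = some f ∧ S.Cons f

/-- A rule is cons-free if every constructor-headed subterm of the right-hand side
is a data term or a (strict) subterm of the left-hand side. -/
def ConsFreeRule {α : Type} (S : Sig α) (ρ : Rule α) : Prop :=
  ∀ t, Subtm t ρ.rhs → ConsHead S t → (IsData S t ∨ StrSubtm t ρ.lhs)

/-- A left-linear cons-free constructor rule (with well-typed sides of equal type,
and variables of the right-hand side occurring on the left). -/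
def GoodRule {α : Type} (S : Sig α) (ρ : Rule α) : Prop :=
  LhsSpine S ρ.lhs ∧
  (∀ x, Tm.count x ρ.lhs ≤ 1) ∧
  ρ.rhs.vars ⊆ ρ.lhs.vars ∧
  (∃ σ, HasTy S ρ.lhs σ ∧ HasTy S ρ.rhs σ) ∧
  ConsFreeRule S ρ

/-- One-step rewriting: closure of rule instances under application contexts. -/
inductive Rew {α : Type} (R : Set (Rule α)) : Tm α → Tm α → Prop where
  | root {ρ : Rule α} {γ : ℕ → Tm α} :
      ρ ∈ R → Rew R (subst γ ρ.lhs) (subst γ ρ.rhs)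
  | appL {s s' t : Tm α} : Rew R s s' → Rew R (.app s t) (.app s' t)
  | appR {s t t' : Tm α} : Rew R t t' → Rew R (.app s t) (.app s t')

/-- `s` is `B`-safe: every constructor-headed subterm of `s` lies in `B`. -/
def BSafe {α : Type} (S : Sig α) (B : Set (Tm α)) (s : Tm α) : Prop :=
  ∀ t, Subtm t s → ConsHead S t → t ∈ B

/-- `B` is a suitable set of data terms: it consists of data terms, is closed
under subterms, and contains all data subterms of right-hand sides of rules. -/
def GoodB {α : Type} (S : Sig α) (R : Set (Rule α)) (B : Set (Tm α)) : Prop :=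
  (∀ t ∈ B, IsData S t) ∧
  (∀ t ∈ B, ∀ u, Subtm u t → u ∈ B) ∧
  (∀ ρ ∈ R, ∀ t, Subtm t ρ.rhs → IsData S t → t ∈ B)

/-- Spine of a basic term: a defined symbol applied to data terms. -/
inductive BasicSpine {α : Type} (S : Sig α) : Tm α → Prop where
  | head {f : α} : ¬ S.Cons f → BasicSpine S (.sym f)
  | app {s t : Tm α} : BasicSpine S s → IsData S t → BasicSpine S (.app s t)

/-- Basic terms: a defined symbol applied to data terms, of base type. -/
def Basic {α : Type} (S : Sig α) (s : Tm α) : Prop :=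
  BasicSpine S s ∧ ∃ i, HasTy S s (.base i)

/-- The set `B_s`: data terms occurring in `s` or in a right-hand side of a rule. -/
def Bset {α : Type} (S : Sig α) (R : Set (Rule α)) (s : Tm α) : Set (Tm α) :=
  { t | IsData S t ∧ (Subtm t s ∨ ∃ ρ ∈ R, Subtm t ρ.rhs) }
/-! # Labeled systems -/

open Classical in
/-- `labelTm S i s` replaces every defined symbol `f` of `s` by its `i`-labeled
copy `(f, i)`; constructors are unaffected (they get the fixed label `0`). -/
noncomputable def labelTm {α : Type} (S : Sig α) (i : ℕ) : Tm α → Tm (α × ℕ)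
  | .sym f => .sym (f, if S.Cons f then 0 else i)
  | .var x => .var x
  | .app s t => .app (labelTm S i s) (labelTm S i t)

/-- Erasing labels. -/
def eraseTm {α : Type} : Tm (α × ℕ) → Tm α
  | .sym p => .sym p.1
  | .var x => .var x
  | .app s t => .app (eraseTm s) (eraseTm t)

/-- The labeled signature: each labeled copy keeps the status and type of the
original symbol. -/
def SigLab {α : Type} (S : Sig α) : Sig (α × ℕ) :=
  { Cons := fun p => S.Cons p.1
    typeOf := fun p => S.typeOf p.1
    varTy := S.varTy }

/-- The labeled rules: `f_{i+1} → f_i` for every defined symbol `f`, and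
`f_{i+1} ℓ₁ ⋯ ℓ_k → label_i(r)` for every rule `f ℓ₁ ⋯ ℓ_k → r` of `R`. -/
def RLab {α : Type} (S : Sig α) (R : Set (Rule α)) : Set (Rule (α × ℕ)) :=
  { ρ' | ∃ f i, ¬ S.Cons f ∧ ρ' = ⟨.sym (f, i + 1), .sym (f, i)⟩ } ∪
  { ρ' | ∃ ρ ∈ R, ∃ i, ρ' = ⟨labelTm S (i + 1) ρ.lhs, labelTm S i ρ.rhs⟩ }

/-- A symbol applied to a list of arguments. -/
def mkApp {α : Type} (h : Tm α) (l : List (Tm α)) : Tm α := l.foldl Tm.app h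

/-- All argument types of a type are of order 0 (base types). -/
def ConsArgsBase : Ty → Prop
  | .base _ => True
  | .arrow σ τ => σ.order = 0 ∧ ConsArgsBase τ

/-- Termination of a term: no infinite reduction starts from it. -/
def TerminatingTm {α : Type} (R : Set (Rule α)) (s : Tm α) : Prop :=
  ¬ ∃ seq : ℕ → Tm α, seq 0 = s ∧ ∀ n, Rew R (seq n) (seq (n + 1))

/-- The computability predicate, by recursion on types: a base-type term is
computable iff it is terminating; `s : σ ⇒ τ` is computable iff `s t` is
computable for every computable `t : σ`. -/
def Comp {α : Type} (S : Sig α) (R : Set (Rule α)) : Ty → Tm α → Prop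
  | .base _, s => TerminatingTm R s
  | .arrow σ τ, s => ∀ t, HasTy S t σ → Comp S R σ t → Comp S R τ (.app s t)

/-- Existence of a semi-outermost reduction from `s` to `t`. -/
inductive SemiOut {α : Type} (R : Set (Rule α)) : Tm α → Tm α → Prop where
  | refl (s : Tm α) : SemiOut R s s
  | step {f : α} {ss ls : List (Tm α)} {ρ : Rule α} {γ : ℕ → Tm α} {t : Tm α}
      (hρ : ρ ∈ R) (hl : ρ.lhs = mkApp (Tm.sym f) ls)
      (hle : ls.length ≤ ss.length)
      (hargs : ∀ j (hj : j < ls.length),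
        SemiOut R (ss[j]'(lt_of_lt_of_le hj hle)) (subst γ (ls[j]'hj)))
      (hvar : ∀ j (hj : j < ls.length), (∃ x, ls[j]'hj = Tm.var x) →
        ss[j]'(lt_of_lt_of_le hj hle) = subst γ (ls[j]'hj))
      (hrest : SemiOut R (mkApp (subst γ ρ.rhs) (ss.drop ls.length)) t) :
      SemiOut R (mkApp (Tm.sym f) ss) t

/-!
The argument applies to any system of left-linear cons-free constructor rules, which the
labeled system is. Instead of the termination of `R_lab`, a weight on parallel rewriting steps
drives the induction.

Call a term safe (`AppBSafe`) if each of its constructor-headed subterms is an element of `B`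
applied to further arguments. Safety is preserved by rewriting; a safe constructor-headed term
that reduces to a data term already is that data term, and a safe instance of a non-variable
pattern is a data term.

The key lemma: if `u` reduces semi-outermost to a data term `t`, so does every safe `s` that
rewrites to `u` in one parallel step. This goes by induction on the semi-outermost reduction
and on the weight of the parallel step. If the parallel step contracts a redex at the head of
the spine of `s`, perform that head step first; what remains is a lighter parallel step. If it
only rewrites the arguments `ss` of `f ss` to the arguments `us` of `f us`, the rule that the
semi-outermost reduction applies to `f us` also applies to `f ss`, once its substitution is
updated at the variable arguments (left-linearity); the other arguments reduce to safe
instances of non-variable patterns, hence to data terms, and the inductive hypothesis applies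
to them. Prepending the steps of `s →* t` one at a time to the empty reduction of `t` proves
the theorem.
-/

local notation:50 a " →[" R "]* " b => Relation.ReflTransGen (Rew R) a b

section Spine
variable {α : Type}

@[simp]
theorem mkApp_nil (h : Tm α) : mkApp h [] = h := rfl

theorem mkApp_cons (h a : Tm α) (l : List (Tm α)) : mkApp h (a :: l) = mkApp (.app h a) l :=
  rfl

theorem mkApp_append (h : Tm α) (l₁ l₂ : List (Tm α)) :
    mkApp h (l₁ ++ l₂) = mkApp (mkApp h l₁) l₂ :=
  List.foldl_append

theorem mkApp_concat (h : Tm α) (l : List (Tm α)) (a : Tm α) :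
    mkApp h (l ++ [a]) = .app (mkApp h l) a := by
  rw [mkApp_append]; rfl

theorem headSym_mkApp (h : Tm α) (l : List (Tm α)) : (mkApp h l).headSym = h.headSym := by
  induction l generalizing h with
  | nil => rfl
  | cons a l ih => rw [mkApp_cons, ih]; rfl

theorem subst_mkApp (γ : ℕ → Tm α) (h : Tm α) (l : List (Tm α)) :
    subst γ (mkApp h l) = mkApp (subst γ h) (l.map (subst γ)) := by
  induction l generalizing h with
  | nil => rfl
  | cons a l ih => rw [mkApp_cons, ih]; rfl

theorem mem_vars_mkApp {x : ℕ} {h : Tm α} {l : List (Tm α)} :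
    x ∈ (mkApp h l).vars ↔ x ∈ h.vars ∨ ∃ a ∈ l, x ∈ a.vars := by
  induction l generalizing h with
  | nil => simp
  | cons a l ih => simp [mkApp_cons, ih, Tm.vars, or_assoc]

theorem count_mkApp (x : ℕ) (h : Tm α) (l : List (Tm α)) :
    (mkApp h l).count x = h.count x + (l.map (Tm.count x)).sum := by
  induction l generalizing h with
  | nil => simp
  | cons a l ih => simp [mkApp_cons, ih, Tm.count, add_assoc]

theorem Tm.exists_eq_mkApp_sym {t : Tm α} {c : α} (h : t.headSym = some c) :
    ∃ l, t = mkApp (.sym c) l := by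
  induction t with
  | sym f => cases h; exact ⟨[], rfl⟩
  | var x => cases h
  | app s u ih _ =>
    obtain ⟨l, rfl⟩ := ih h
    exact ⟨l ++ [u], (mkApp_concat _ _ _).symm⟩

theorem Tm.exists_eq_mkApp_var {t : Tm α} (h : t.headSym = none) :
    ∃ y l, t = mkApp (.var y) l := by
  induction t with
  | sym f => cases h
  | var x => exact ⟨x, [], rfl⟩
  | app s u ih _ =>
    obtain ⟨y, l, rfl⟩ := ih h
    exact ⟨y, l ++ [u], (mkApp_concat _ _ _).symm⟩

theorem mkApp_sym_inj {f g : α} {l m : List (Tm α)}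
    (h : mkApp (.sym f) l = mkApp (.sym g) m) : f = g ∧ l = m := by
  induction l using List.reverseRecOn generalizing m with
  | nil =>
    rcases m.eq_nil_or_concat with rfl | ⟨m, b, rfl⟩
    · cases h; exact ⟨rfl, rfl⟩
    · rw [List.concat_eq_append, mkApp_concat] at h; cases h
  | append_singleton l a ih =>
    rcases m.eq_nil_or_concat with rfl | ⟨m, b, rfl⟩
    · rw [mkApp_concat] at h; cases h
    · rw [List.concat_eq_append, mkApp_concat, mkApp_concat] at h
      injection h with h hab
      obtain ⟨rfl, rfl⟩ := ih h
      exact ⟨rfl, by rw [hab, List.concat_eq_append]⟩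

theorem subst_congr {γ₁ γ₂ : ℕ → Tm α} {t : Tm α}
    (h : ∀ y ∈ t.vars, γ₁ y = γ₂ y) : subst γ₁ t = subst γ₂ t := by
  induction t with
  | sym f => rfl
  | var y => exact h y rfl
  | app s t ihs iht =>
    rw [subst, subst, ihs fun y hy => h y (.inl hy), iht fun y hy => h y (.inr hy)]

theorem subst_of_ground {t : Tm α} (h : t.ground) (γ : ℕ → Tm α) : subst γ t = t := by
  induction t with
  | sym f => rfl
  | var x => exact h.elim
  | app s t ihs iht => rw [subst, ihs h.1, iht h.2]

theorem headSym_subst {γ : ℕ → Tm α} {w : Tm α} {c : α} (h : w.headSym = some c) :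
    (subst γ w).headSym = some c := by
  induction w with
  | sym f => exact h
  | var x => cases h
  | app s t ihs _ => exact ihs h

end Spine

section Subterm
variable {α : Type}

theorem strSubtm_of_subtm_of_strSubtm {a b c : Tm α} (hab : Subtm a b) (hbc : StrSubtm b c) :
    StrSubtm a c := by
  induction c generalizing b with
  | sym f => cases hbc
  | var x => cases hbc
  | app s u ihs ihu =>
    cases hbc with
    | left h => exact .left (ihs hab h)
    | right h =>
      cases h with
      | refl => exact .right hab
      | strict h => exact .right (.strict (ihu hab h))

theorem Subtm.trans {a b c : Tm α} (hab : Subtm a b) (hbc : Subtm b c) : Subtm a c := by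
  cases hbc with
  | refl => exact hab
  | strict h => exact .strict (strSubtm_of_subtm_of_strSubtm hab h)

theorem eq_of_subtm_sym {f : α} {w : Tm α} (h : Subtm w (.sym f)) : w = .sym f := by
  cases h with
  | refl => rfl
  | strict h => cases h

theorem eq_of_subtm_var {x : ℕ} {w : Tm α} (h : Subtm w (.var x)) : w = .var x := by
  cases h with
  | refl => rfl
  | strict h => cases h

theorem sizeOf_lt_of_strSubtm {a b : Tm α} (h : StrSubtm a b) : sizeOf a < sizeOf b := by
  induction b generalizing a with
  | sym f => cases h
  | var x => cases h
  | app s u ihs ihu =>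
    cases h with
    | left h => have := ihs h; simp; omega
    | right h =>
      cases h with
      | refl => simp
      | strict h => have := ihu h; simp; omega

theorem StrSubtm.irrefl (a : Tm α) : ¬ StrSubtm a a :=
  fun h => (sizeOf_lt_of_strSubtm h).false

theorem strSubtm_mkApp_of_mem {h a : Tm α} {l : List (Tm α)} (ha : a ∈ l) :
    StrSubtm a (mkApp h l) := by
  induction l using List.reverseRecOn with
  | nil => cases ha
  | append_singleton l b ih =>
    rw [mkApp_concat]
    rcases List.mem_append.mp ha with ha | ha
    · exact .left (ih ha)
    · rw [List.mem_singleton.mp ha]; exact .right (.refl b)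

theorem strSubtm_mkApp_inv {h w : Tm α} {l : List (Tm α)} (hw : StrSubtm w (mkApp h l)) :
    StrSubtm w h ∨ ∃ a ∈ l, Subtm w a := by
  induction l using List.reverseRecOn with
  | nil => exact .inl hw
  | append_singleton l a ih =>
    rw [mkApp_concat] at hw
    cases hw with
    | left hw =>
      rcases ih hw with hw | ⟨b, hb, hwb⟩
      · exact .inl hw
      · exact .inr ⟨b, List.mem_append_left _ hb, hwb⟩
    | right hw => exact .inr ⟨a, by simp, hw⟩

theorem StrSubtm.subst (γ : ℕ → Tm α) {w r : Tm α} (h : StrSubtm w r) :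
    StrSubtm (subst γ w) (subst γ r) := by
  induction r generalizing w with
  | sym f => cases h
  | var x => cases h
  | app a b iha ihb =>
    cases h with
    | left h => exact .left (iha h)
    | right h =>
      cases h with
      | refl => exact .right (.refl _)
      | strict h => exact .right (.strict (ihb h))

theorem subtm_subst_cases (γ : ℕ → Tm α) {r w : Tm α} (hw : Subtm w (subst γ r)) :
    (∃ x ∈ r.vars, Subtm w (γ x)) ∨
    (∃ w₀, Subtm w₀ r ∧ w = subst γ w₀ ∧ w₀.headSym.isSome) ∨
    (∃ y ∈ r.vars, ∃ args, args ≠ [] ∧ w = mkApp (γ y) (args.map (subst γ))) := by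
  induction r generalizing w with
  | sym f => exact .inr (.inl ⟨.sym f, .refl _, eq_of_subtm_sym hw, rfl⟩)
  | var x => exact .inl ⟨x, rfl, hw⟩
  | app r₁ r₂ ih₁ ih₂ =>
    cases hw with
    | refl =>
      cases hr : (Tm.app r₁ r₂).headSym with
      | some f => exact .inr (.inl ⟨_, .refl _, rfl, by rw [hr]; rfl⟩)
      | none =>
        obtain ⟨y, l, hl⟩ := Tm.exists_eq_mkApp_var hr
        refine .inr (.inr ⟨y, ?_, l, ?_, ?_⟩)
        · rw [hl]; exact mem_vars_mkApp.mpr (.inl rfl)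
        · rintro rfl; cases hl
        · rw [hl, subst_mkApp]; rfl
    | strict hstr =>
      cases hstr with
      | left h =>
        rcases ih₁ (.strict h) with ⟨x, hx, hw⟩ | ⟨w₀, hsub, rfl, hhead⟩ |
          ⟨y, hy, args, hne, hw⟩
        · exact .inl ⟨x, .inl hx, hw⟩
        · cases hsub with
          | refl => exact (StrSubtm.irrefl _ h).elim
          | strict h' => exact .inr (.inl ⟨w₀, .strict (.left h'), rfl, hhead⟩)
        · exact .inr (.inr ⟨y, .inl hy, args, hne, hw⟩)
      | right h =>
        rcases ih₂ h with ⟨x, hx, hw⟩ | ⟨w₀, hsub, rfl, hhead⟩ |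
          ⟨y, hy, args, hne, hw⟩
        · exact .inl ⟨x, .inr hx, hw⟩
        · exact .inr (.inl ⟨w₀, .strict (.right hsub), rfl, hhead⟩)
        · exact .inr (.inr ⟨y, .inr hy, args, hne, hw⟩)

end Subterm

section Typing
variable {α : Type} {S : Sig α}

theorem HasTy.unique {s : Tm α} {σ τ : Ty} (hσ : HasTy S s σ) (hτ : HasTy S s τ) :
    σ = τ := by
  induction hσ generalizing τ with
  | sym f => cases hτ; rfl
  | var x => cases hτ; rfl
  | app _ _ ih _ =>
    cases hτ with
    | app hs _ => cases ih hs; rfl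

theorem hasTy_mkApp_sym_unique {f : α} {l₁ l₂ : List (Tm α)}
    (hlen : l₁.length = l₂.length) {σ₁ σ₂ : Ty}
    (h₁ : HasTy S (mkApp (.sym f) l₁) σ₁) (h₂ : HasTy S (mkApp (.sym f) l₂) σ₂) :
    σ₁ = σ₂ := by
  induction l₁ using List.reverseRecOn generalizing l₂ σ₁ σ₂ with
  | nil =>
    rw [List.eq_nil_of_length_eq_zero hlen.symm] at h₂
    exact h₁.unique h₂
  | append_singleton l₁ a ih =>
    rcases l₂.eq_nil_or_concat with rfl | ⟨l₂, b, rfl⟩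
    · simp at hlen
    · rw [List.concat_eq_append, mkApp_concat] at h₂
      rw [mkApp_concat] at h₁
      cases h₁ with
      | app h₁ _ =>
        cases h₂ with
        | app h₂ _ => cases ih (by simpa using hlen) h₁ h₂; rfl

theorem HasTy.isArrow_of_length_lt {f : α} {l l' : List (Tm α)} {σ τ : Ty}
    (h : HasTy S (mkApp (.sym f) l) σ) (hlt : l'.length < l.length)
    (h' : HasTy S (mkApp (.sym f) l') τ) : ∃ τ₁ τ₂, τ = .arrow τ₁ τ₂ := by
  induction l using List.reverseRecOn generalizing σ with
  | nil => simp at hlt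
  | append_singleton l a ih =>
    rw [mkApp_concat] at h
    cases h with
    | app h _ =>
      rcases lt_or_eq_of_le (Nat.le_of_lt_succ (by simpa using hlt)) with hlt | heq
      · exact ih h hlt
      · exact ⟨_, _, hasTy_mkApp_sym_unique heq h' h⟩

end Typing

section Patterns
variable {α : Type} {S : Sig α}

theorem PatSpine.exists_eq_mkApp {s : Tm α} (h : PatSpine S s) :
    ∃ c ps, s = mkApp (.sym c) ps ∧ S.Cons c ∧ ∀ p ∈ ps, Pat S p := by
  induction s with
  | sym f => cases h with | head hc => exact ⟨f, [], rfl, hc, by simp⟩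
  | var x => cases h
  | app a b iha _ =>
    cases h with
    | app hs hp =>
      obtain ⟨c, ps, rfl, hc, hps⟩ := iha hs
      refine ⟨c, ps ++ [b], (mkApp_concat _ _ _).symm, hc, fun p hp' => ?_⟩
      rcases List.mem_append.mp hp' with h | h
      · exact hps p h
      · rwa [List.mem_singleton.mp h]

theorem PatSpine.headSym {s : Tm α} (h : PatSpine S s) :
    ∃ c, s.headSym = some c ∧ S.Cons c := by
  obtain ⟨c, ps, rfl, hc, _⟩ := h.exists_eq_mkApp
  exact ⟨c, headSym_mkApp _ _, hc⟩

theorem IsData.patSpine {t : Tm α} (h : IsData S t) : PatSpine S t := by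
  obtain ⟨hp, hg⟩ := h
  cases hp with
  | var x => exact hg.elim
  | cons hs _ => exact hs

theorem IsData.hasTy_base {t : Tm α} (h : IsData S t) : ∃ i, HasTy S t (.base i) := by
  obtain ⟨hp, hg⟩ := h
  cases hp with
  | var x => exact hg.elim
  | cons _ h => exact h

theorem IsData.consHead {t : Tm α} (h : IsData S t) : ConsHead S t :=
  h.patSpine.headSym

theorem not_isData_mkApp {b : Tm α} (hb : IsData S b) {ex : List (Tm α)} (hex : ex ≠ []) :
    ¬ IsData S (mkApp b ex) := by
  intro hd
  obtain ⟨c, bs, rfl, -, -⟩ := hb.patSpine.exists_eq_mkApp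
  obtain ⟨i, hi⟩ := hb.hasTy_base
  obtain ⟨j, hj⟩ := hd.hasTy_base
  rw [← mkApp_append] at hj
  obtain ⟨_, _, h⟩ := hj.isArrow_of_length_lt (by simpa using List.length_pos_iff.mpr hex) hi
  cases h

theorem subtm_subst_of_mem_vars {γ : ℕ → Tm α} {x : ℕ} {p : Tm α} (hx : x ∈ p.vars) :
    (PatSpine S p → StrSubtm (γ x) (subst γ p)) ∧
      (Pat S p → Subtm (γ x) (subst γ p)) := by
  induction p with
  | sym f => cases hx
  | var y =>
    obtain rfl : x = y := hx
    exact ⟨fun h => (by cases h), fun _ => .refl _⟩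
  | app a b iha ihb =>
    have hspine : PatSpine S (.app a b) → StrSubtm (γ x) (subst γ (.app a b)) := by
      intro h
      cases h with
      | app ha hb =>
        rcases hx with hx | hx
        · exact .left ((iha hx).1 ha)
        · exact .right ((ihb hx).2 hb)
    refine ⟨hspine, fun h => ?_⟩
    cases h with
    | cons hs _ => exact .strict (hspine hs)

theorem Pat.subtm_subst_of_mem_vars {γ : ℕ → Tm α} {x : ℕ} {p : Tm α} (hp : Pat S p)
    (hx : x ∈ p.vars) : Subtm (γ x) (subst γ p) :=
  (_root_.subtm_subst_of_mem_vars hx).2 hp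

end Patterns

section Rewriting
variable {α : Type} {R : Set (Rule α)}

theorem Rew.mkApp_left {a a' : Tm α} (l : List (Tm α)) (h : Rew R a a') :
    Rew R (mkApp a l) (mkApp a' l) := by
  induction l using List.reverseRecOn with
  | nil => exact h
  | append_singleton l b ih => rw [mkApp_concat, mkApp_concat]; exact .appL ih

theorem rtg_app {a a' b b' : Tm α} (ha : a →[R]* a') (hb : b →[R]* b') :
    .app a b →[R]* .app a' b' :=
  (ha.lift (Tm.app · b) fun _ _ => Rew.appL).trans (hb.lift (Tm.app a') fun _ _ => Rew.appR)

theorem rtg_mkApp {h h' : Tm α} {l l' : List (Tm α)} (hh : h →[R]* h')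
    (hl : List.Forall₂ (fun a b => a →[R]* b) l l') : mkApp h l →[R]* mkApp h' l' := by
  induction hl generalizing h h' with
  | nil => exact hh
  | cons hab _ ih => exact ih (rtg_app hh hab)

end Rewriting

structure IsLinearConsFreeRule {α : Type} (S : Sig α) (ρ : Rule α) : Prop where
  lhsSpine : LhsSpine S ρ.lhs
  linear : ∀ x, ρ.lhs.count x ≤ 1
  rhs_vars_subset : ρ.rhs.vars ⊆ ρ.lhs.vars
  consFree : ConsFreeRule S ρ

/-- `B`-safety is not preserved by rewriting: a right-hand side may apply a variable to
arguments, which places arguments after an instantiated data term. -/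
def AppBSafe {α : Type} (S : Sig α) (B : Set (Tm α)) (u : Tm α) : Prop :=
  ∀ w, Subtm w u → ConsHead S w → ∃ b ∈ B, ∃ ex, w = mkApp b ex

section ConsFree
variable {α : Type} {S : Sig α} {R : Set (Rule α)} {B : Set (Tm α)}

theorem LhsSpine.exists_eq_mkApp {l : Tm α} (h : LhsSpine S l) :
    ∃ f ls, l = mkApp (.sym f) ls ∧ ¬ S.Cons f ∧ ∀ p ∈ ls, Pat S p := by
  induction h with
  | head hf => exact ⟨_, [], rfl, hf, by simp⟩
  | @app s t _ hp ih =>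
    obtain ⟨f, ls, rfl, hf, hls⟩ := ih
    refine ⟨f, ls ++ [t], (mkApp_concat _ _ _).symm, hf, fun p hp' => ?_⟩
    rcases List.mem_append.mp hp' with h | h
    · exact hls p h
    · rwa [List.mem_singleton.mp h]

theorem LhsSpine.not_consHead_subst {l : Tm α} (h : LhsSpine S l) (γ : ℕ → Tm α) :
    ¬ ConsHead S (subst γ l) := by
  obtain ⟨f, ls, rfl, hf, -⟩ := h.exists_eq_mkApp
  rintro ⟨c, hc, hcons⟩
  rw [subst_mkApp, headSym_mkApp] at hc
  cases hc
  exact hf hcons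

theorem IsLinearConsFreeRule.subtm_subst_lhs {ρ : Rule α} (hρ : IsLinearConsFreeRule S ρ)
    (γ : ℕ → Tm α) {y : ℕ} (hy : y ∈ ρ.lhs.vars) : Subtm (γ y) (subst γ ρ.lhs) := by
  obtain ⟨f, ls, hl, -, hls⟩ := hρ.lhsSpine.exists_eq_mkApp
  rw [hl] at hy ⊢
  obtain ⟨p, hp, hyp⟩ := (mem_vars_mkApp.mp hy).resolve_left id
  rw [subst_mkApp]
  exact ((hls p hp).subtm_subst_of_mem_vars hyp).trans
    (.strict (strSubtm_mkApp_of_mem (List.mem_map_of_mem hp)))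

theorem not_rew_of_patSpine (hR : ∀ ρ ∈ R, IsLinearConsFreeRule S ρ)
    {s v : Tm α} (h : Rew R s v) (hs : PatSpine S s) (hg : s.ground) :
    False := by
  induction h with
  | @root ρ γ hρ => exact (hR ρ hρ).lhsSpine.not_consHead_subst γ hs.headSym
  | appL _ ih => cases hs with | app hs _ => exact ih hs hg.1
  | appR _ ih =>
    cases hs with
    | app _ hp =>
      cases hp with
      | var x => exact hg.2.elim
      | cons hs _ => exact ih hs hg.2

theorem IsData.not_rew (hR : ∀ ρ ∈ R, IsLinearConsFreeRule S ρ)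
    {s v : Tm α} (hd : IsData S s) : ¬ Rew R s v :=
  fun h => not_rew_of_patSpine hR h hd.patSpine hd.2

theorem IsData.eq_of_rtg (hR : ∀ ρ ∈ R, IsLinearConsFreeRule S ρ)
    {s t : Tm α} (hd : IsData S s) (h : s →[R]* t) : t = s := by
  induction h using Relation.ReflTransGen.head_induction_on with
  | refl => rfl
  | head hab _ _ => exact (hd.not_rew hR hab).elim

theorem Rew.app_of_consHead (hR : ∀ ρ ∈ R, IsLinearConsFreeRule S ρ)
    {s v : Tm α} (h : Rew R s v) (hs : ConsHead S s) :
    ∃ a b a' b', s = .app a b ∧ v = .app a' b' ∧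
      (Rew R a a' ∧ b = b' ∨ a = a' ∧ Rew R b b') := by
  cases h with
  | @root ρ γ hρ => exact ((hR ρ hρ).lhsSpine.not_consHead_subst γ hs).elim
  | appL h => exact ⟨_, _, _, _, rfl, rfl, .inl ⟨h, rfl⟩⟩
  | appR h => exact ⟨_, _, _, _, rfl, rfl, .inr ⟨rfl, h⟩⟩

theorem BSafe.appBSafe {u : Tm α} (h : BSafe S B u) : AppBSafe S B u :=
  fun w hw hc => ⟨w, h w hw hc, [], rfl⟩

theorem AppBSafe.mono {u a : Tm α} (hu : AppBSafe S B u) (h : Subtm a u) : AppBSafe S B a :=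
  fun w hw hc => hu w (hw.trans h) hc

theorem AppBSafe.app {a b : Tm α} (ha : AppBSafe S B a) (hb : AppBSafe S B b) :
    AppBSafe S B (.app a b) := by
  intro w hw hc
  cases hw with
  | refl =>
    obtain ⟨b₀, hb₀, ex, hex⟩ := ha a (.refl a) hc
    exact ⟨b₀, hb₀, ex ++ [b], by rw [mkApp_concat, hex]⟩
  | strict hw =>
    cases hw with
    | left hw => exact ha w (.strict hw) hc
    | right hw => exact hb w hw hc

theorem AppBSafe.app_inv {a b : Tm α} (h : AppBSafe S B (.app a b)) :
    AppBSafe S B b ∧ (.app a b ∈ B ∨ AppBSafe S B a) := by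
  refine ⟨h.mono (.strict (.right (.refl b))), or_iff_not_imp_left.mpr fun hB w hw hc => ?_⟩
  cases hw with
  | refl =>
    obtain ⟨b₀, hb₀, ex, hex⟩ := h _ (.refl _) hc
    rcases ex.eq_nil_or_concat with rfl | ⟨ex, e, rfl⟩
    · exact (hB (hex ▸ hb₀)).elim
    · rw [List.concat_eq_append, mkApp_concat] at hex
      injection hex with hex
      exact ⟨b₀, hb₀, ex, hex⟩
  | strict hw => exact h w (.strict (.left hw)) hc

theorem AppBSafe.subst_rhs {ρ : Rule α} (hρ : IsLinearConsFreeRule S ρ)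
    (hB : ∀ t, Subtm t ρ.rhs → IsData S t → t ∈ B) {γ : ℕ → Tm α}
    (h : AppBSafe S B (subst γ ρ.lhs)) : AppBSafe S B (subst γ ρ.rhs) := by
  intro w hw hc
  rcases subtm_subst_cases γ hw with ⟨x, hx, hwx⟩ | ⟨w₀, hw₀, rfl, hhead⟩ |
    ⟨y, hy, args, -, rfl⟩
  · exact h w (hwx.trans (hρ.subtm_subst_lhs γ (hρ.rhs_vars_subset hx))) hc
  · obtain ⟨c, hc₀⟩ := Option.isSome_iff_exists.mp hhead
    obtain ⟨c', hc', hcons⟩ := hc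
    cases (headSym_subst hc₀).symm.trans hc'
    rcases hρ.consFree w₀ hw₀ ⟨c, hc₀, hcons⟩ with hd | hstr
    · rw [subst_of_ground hd.2]
      exact ⟨w₀, hB w₀ hw₀ hd, [], rfl⟩
    · exact h _ (.strict (hstr.subst γ)) ⟨c, headSym_subst hc₀, hcons⟩
  · obtain ⟨c, hc', hcons⟩ := hc
    rw [headSym_mkApp] at hc'
    obtain ⟨b, hb, ex, hex⟩ :=
      h (γ y) (hρ.subtm_subst_lhs γ (hρ.rhs_vars_subset hy)) ⟨c, hc', hcons⟩
    exact ⟨b, hb, ex ++ args.map (subst γ), by rw [hex, mkApp_append]⟩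

theorem AppBSafe.rew (hR : ∀ ρ ∈ R, IsLinearConsFreeRule S ρ)
    (hGB : GoodB S R B) {u v : Tm α} (hrew : Rew R u v)
    (h : AppBSafe S B u) : AppBSafe S B v := by
  induction hrew with
  | @root ρ γ hρ => exact h.subst_rhs (hR ρ hρ) (hGB.2.2 ρ hρ)
  | appL hrew ih =>
    obtain ⟨hb, hB | ha⟩ := h.app_inv
    · exact ((hGB.1 _ hB).not_rew hR (.appL hrew)).elim
    · exact (ih ha).app hb
  | appR hrew ih =>
    obtain ⟨hb, hB | ha⟩ := h.app_inv
    · exact ((hGB.1 _ hB).not_rew hR (.appR hrew)).elim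
    · exact ha.app (ih hb)

theorem AppBSafe.rtg (hR : ∀ ρ ∈ R, IsLinearConsFreeRule S ρ)
    (hGB : GoodB S R B) {u v : Tm α} (huv : u →[R]* v)
    (h : AppBSafe S B u) : AppBSafe S B v := by
  induction huv with
  | refl => exact h
  | tail _ hstep ih => exact ih.rew hR hGB hstep

theorem Rew.eq_mkApp_of_isData (hR : ∀ ρ ∈ R, IsLinearConsFreeRule S ρ)
    {b : Tm α} (hb : IsData S b) {ex : List (Tm α)} (hex : ex ≠ [])
    {v : Tm α} (h : Rew R (mkApp b ex) v) : ∃ ex', ex' ≠ [] ∧ v = mkApp b ex' := by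
  induction ex using List.reverseRecOn generalizing v with
  | nil => exact (hex rfl).elim
  | append_singleton ex e ih =>
    obtain ⟨c, hc, hcons⟩ := hb.consHead
    rw [mkApp_concat] at h
    obtain ⟨_, _, a', e', heq, rfl, ⟨hstep, rfl⟩ | ⟨rfl, -⟩⟩ :=
      h.app_of_consHead hR ⟨c, (headSym_mkApp b ex).trans hc, hcons⟩
    · injection heq with heq he
      subst heq he
      rcases ex.eq_nil_or_concat with rfl | ⟨ex, x, rfl⟩
      · exact (hb.not_rew hR hstep).elim
      · obtain ⟨ex', -, rfl⟩ := ih (by simp) hstep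
        exact ⟨ex' ++ [e], by simp, (mkApp_concat _ _ _).symm⟩
    · injection heq with heq
      subst heq
      exact ⟨ex ++ [e'], by simp, (mkApp_concat _ _ _).symm⟩

theorem AppBSafe.eq_of_rtg_isData (hR : ∀ ρ ∈ R, IsLinearConsFreeRule S ρ)
    (hGB : GoodB S R B) {u t : Tm α} (hu : AppBSafe S B u)
    (hc : ConsHead S u) (hut : u →[R]* t) (ht : IsData S t) : u = t := by
  obtain ⟨b, hb, ex, rfl⟩ := hu u (.refl u) hc
  have hbd : IsData S b := hGB.1 b hb
  rcases eq_or_ne ex [] with rfl | hex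
  · exact (hbd.eq_of_rtg hR hut).symm
  · suffices ∃ ex', ex' ≠ [] ∧ t = mkApp b ex' by
      obtain ⟨ex', hex', rfl⟩ := this
      exact (not_isData_mkApp hbd hex' ht).elim
    clear ht
    induction hut with
    | refl => exact ⟨ex, hex, rfl⟩
    | tail _ hstep ih =>
      obtain ⟨ex', hex', rfl⟩ := ih
      exact hstep.eq_mkApp_of_isData hR hbd hex'

theorem Pat.isData_subst (hGB : GoodB S R B) {p : Tm α} (hp : Pat S p)
    (hnv : ∀ x, p ≠ .var x) {γ : ℕ → Tm α} (h : AppBSafe S B (subst γ p)) :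
    IsData S (subst γ p) := by
  cases hp with
  | var x => exact (hnv x rfl).elim
  | cons hs hty =>
    obtain ⟨c, ps, rfl, hc, -⟩ := hs.exists_eq_mkApp
    obtain ⟨i, hi⟩ := hty
    rw [subst_mkApp] at h ⊢
    obtain ⟨b, hb, ex, hex⟩ := h _ (.refl _) ⟨c, headSym_mkApp _ _, hc⟩
    have hbd : IsData S b := hGB.1 b hb
    rcases eq_or_ne ex [] with rfl | hne
    · rwa [hex]
    obtain ⟨c', bs, rfl, -, -⟩ := hbd.patSpine.exists_eq_mkApp
    obtain ⟨rfl, hargs⟩ := mkApp_sym_inj (hex.trans (mkApp_append _ _ _).symm)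
    obtain ⟨j, hj⟩ := hbd.hasTy_base
    have hlt : bs.length < ps.length := by
      have := List.length_pos_iff.mpr hne
      have := congrArg List.length hargs
      simp only [List.length_map, List.length_append] at this
      omega
    obtain ⟨_, _, h⟩ := hi.isArrow_of_length_lt hlt hj
    cases h

end ConsFree

theorem List.getElem_add_getElem_le_sum (l : List ℕ) {i j : ℕ} (hi : i < l.length)
    (hj : j < l.length) (hij : i ≠ j) : l[i] + l[j] ≤ l.sum := by
  rw [← Fin.sum_univ_getElem]
  have hsub := Finset.sum_le_sum_of_subset (f := fun k : Fin l.length => l[k.1])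
    (Finset.subset_univ {⟨i, hi⟩, ⟨j, hj⟩})
  rwa [Finset.sum_pair (by simpa using hij)] at hsub

theorem List.forall₂_take_map {α β δ : Type} {r : α → δ → Prop} {g : β → δ}
    {l₁ : List α} {l₂ : List β} (hle : l₂.length ≤ l₁.length)
    (h : ∀ j (hj : j < l₂.length), r (l₁[j]'(lt_of_lt_of_le hj hle)) (g l₂[j])) :
    List.Forall₂ r (l₁.take l₂.length) (l₂.map g) :=
  List.forall₂_iff_get.mpr
    ⟨by simp [hle], fun j h₁ h₂ => by simpa using h j (by simpa using h₂)⟩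

section Linear
variable {α : Type}

theorem Tm.count_pos_of_mem_vars {x : ℕ} {t : Tm α} (h : x ∈ t.vars) : 0 < t.count x := by
  induction t with
  | sym f => simp [Tm.vars] at h
  | var y => simp_all [Tm.vars, Tm.count]
  | app a b iha ihb =>
    rcases h with h | h
    · have := iha h; simp only [Tm.count]; omega
    · have := ihb h; simp only [Tm.count]; omega

theorem eq_of_var_mem_vars_of_linear {ls : List (Tm α)}
    (hlin : ∀ x, (ls.map (Tm.count x)).sum ≤ 1) {j j' : ℕ} (hj : j < ls.length)
    (hj' : j' < ls.length) {x : ℕ} (hx : ls[j] = .var x) (hx' : x ∈ ls[j'].vars) : j = j' := by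
  by_contra hne
  have h₁ : 1 ≤ ls[j].count x := by simp [hx, Tm.count]
  have h₂ : 1 ≤ ls[j'].count x := Tm.count_pos_of_mem_vars hx'
  have := (ls.map (Tm.count x)).getElem_add_getElem_le_sum (by simpa using hj)
    (by simpa using hj') hne
  simp only [List.getElem_map] at this
  linarith [hlin x]

theorem exists_subst_of_linear {ls ss : List (Tm α)}
    (hlin : ∀ x, (ls.map (Tm.count x)).sum ≤ 1) (hle : ls.length ≤ ss.length)
    (γ : ℕ → Tm α) :
    ∃ γ' : ℕ → Tm α,
      (∀ j (hj : j < ls.length) x, ls[j] = .var x → γ' x = ss[j]) ∧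
      (∀ x, (∀ j (hj : j < ls.length), ls[j] ≠ .var x) → γ' x = γ x) ∧
      (∀ j (hj : j < ls.length), (∀ x, ls[j] ≠ .var x) →
        subst γ' ls[j] = subst γ ls[j]) := by
  classical
  let γ' : ℕ → Tm α := fun x =>
    if h : ∃ j, ∃ hj : j < ls.length, ls[j] = .var x then ss[h.choose]'(by
      have := h.choose_spec.choose; omega) else γ x
  have hother : ∀ x, (∀ j (hj : j < ls.length), ls[j] ≠ .var x) → γ' x = γ x := by
    intro x hx
    simp only [γ', dif_neg (not_exists.mpr fun j => not_exists.mpr (hx j))]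
  refine ⟨γ', fun j hj x hx => ?_, hother, fun j hj hnv => subst_congr fun x hx => ?_⟩
  · have h : ∃ j, ∃ hj : j < ls.length, ls[j] = .var x := ⟨j, hj, hx⟩
    have hj' : h.choose = j := eq_of_var_mem_vars_of_linear hlin h.choose_spec.choose hj
      h.choose_spec.choose_spec (by rw [hx]; rfl)
    simp only [γ', dif_pos h, hj']
  · refine hother x fun j' hj' hx' => ?_
    obtain rfl := eq_of_var_mem_vars_of_linear hlin hj' hj hx' hx
    exact hnv x hx'

end Linear

section Parallel
variable {α : Type}

def Tm.varWeight (w : ℕ → ℕ) : Tm α → ℕ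
  | .sym _ => 0
  | .var x => w x
  | .app a b => a.varWeight w + b.varWeight w

/-- The index is a weight: a rule step weighs one more than the derivations of its substitution,
counted with their multiplicity in the right-hand side, so that contracting the redex first and
then rewriting inside the contractum is strictly lighter. -/
inductive ParRew (R : Set (Rule α)) : ℕ → Tm α → Tm α → Prop
  | sym (f : α) : ParRew R 0 (.sym f) (.sym f)
  | var (x : ℕ) : ParRew R 0 (.var x) (.var x)
  | app {m n : ℕ} {s s' t t' : Tm α} :
      ParRew R m s s' → ParRew R n t t' → ParRew R (m + n) (.app s t) (.app s' t')
  | rule {ρ : Rule α} {γ δ : ℕ → Tm α} {w : ℕ → ℕ} :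
      ρ ∈ R → (∀ x, ParRew R (w x) (γ x) (δ x)) →
      ParRew R (ρ.rhs.varWeight w + 1) (subst γ ρ.lhs) (subst δ ρ.rhs)

variable {R : Set (Rule α)}

theorem ParRew.refl (t : Tm α) : ParRew R 0 t t := by
  induction t with
  | sym f => exact .sym f
  | var x => exact .var x
  | app a b iha ihb => exact .app iha ihb

theorem ParRew.congr_subst {γ δ : ℕ → Tm α} {w : ℕ → ℕ}
    (h : ∀ x, ParRew R (w x) (γ x) (δ x)) (r : Tm α) :
    ParRew R (r.varWeight w) (subst γ r) (subst δ r) := by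
  induction r with
  | sym f => exact .sym f
  | var x => exact h x
  | app a b iha ihb => exact .app iha ihb

theorem ParRew.rtg {n : ℕ} {s t : Tm α} (h : ParRew R n s t) : s →[R]* t := by
  induction h with
  | sym f => exact .refl
  | var x => exact .refl
  | app _ _ ih₁ ih₂ => exact rtg_app ih₁ ih₂
  | @rule ρ γ δ w hρ _ ih =>
    have hsubst : ∀ r : Tm α, subst γ r →[R]* subst δ r := by
      intro r
      induction r with
      | sym f => exact .refl
      | var x => exact ih x
      | app a b iha ihb => exact rtg_app iha ihb
    exact (hsubst ρ.lhs).tail (.root hρ)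

theorem Rew.exists_parRew {s t : Tm α} (h : Rew R s t) : ∃ n, ParRew R n s t := by
  induction h with
  | root hρ => exact ⟨_, .rule (w := fun _ => 0) hρ fun x => .refl _⟩
  | appL _ ih => obtain ⟨n, h⟩ := ih; exact ⟨_, .app h (.refl _)⟩
  | appR _ ih => obtain ⟨n, h⟩ := ih; exact ⟨_, .app (.refl _) h⟩

theorem ParRew.mkApp_congr {n : ℕ} {h h' : Tm α} {l l' : List (Tm α)} (hh : ParRew R n h h')
    (hl : List.Forall₂ (fun a b => ∃ m, ParRew R m a b) l l') :
    ∃ n', ParRew R n' (mkApp h l) (mkApp h' l') := by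
  induction hl generalizing n h h' with
  | nil => exact ⟨n, hh⟩
  | cons hab _ ih => obtain ⟨m, hab⟩ := hab; exact ih (hh.app hab)

theorem ParRew.mkApp_sym_inv {n : ℕ} {s : Tm α} {f : α} {us : List (Tm α)}
    (h : ParRew R n s (mkApp (.sym f) us)) :
    (∃ ss, s = mkApp (.sym f) ss ∧ List.Forall₂ (fun a b => ∃ m, ParRew R m a b) ss us) ∨
    (∃ ρ ∈ R, ∃ γ bs m, m < n ∧ s = mkApp (subst γ ρ.lhs) bs ∧
      ParRew R m (mkApp (subst γ ρ.rhs) bs) (mkApp (.sym f) us)) := by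
  generalize hu : mkApp (.sym f) us = u at h
  induction h generalizing us with
  | sym g =>
    obtain ⟨rfl, rfl⟩ := mkApp_sym_inj (m := []) hu
    exact .inl ⟨[], rfl, .nil⟩
  | var x => cases (headSym_mkApp (.sym f) us).symm.trans (congrArg Tm.headSym hu)
  | @app m₁ m₂ _ _ _ _ h₁ h₂ ih₁ _ =>
    rcases us.eq_nil_or_concat with rfl | ⟨us, a, rfl⟩
    · cases hu
    simp only [List.concat_eq_append, mkApp_concat] at hu ⊢
    injection hu with hu ha
    subst ha
    rcases ih₁ hu with ⟨ss, rfl, hss⟩ | ⟨ρ, hρ, γ, bs, m, hm, rfl, hm'⟩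
    · exact .inl ⟨ss ++ [_], (mkApp_concat _ _ _).symm,
        List.rel_append hss (.cons ⟨_, h₂⟩ .nil)⟩
    · refine .inr ⟨ρ, hρ, γ, bs ++ [_], m + m₂, by omega, (mkApp_concat _ _ _).symm, ?_⟩
      rw [mkApp_concat]
      exact hm'.app h₂
  | rule hρ hsub =>
    refine .inr ⟨_, hρ, _, [], _, Nat.lt_succ_self _, rfl, ?_⟩
    exact .congr_subst hsub _

end Parallel

section SemiOutBasics
variable {α : Type} {R : Set (Rule α)}

theorem SemiOut.rtg {s t : Tm α} (h : SemiOut R s t) : s →[R]* t := by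
  induction h with
  | refl s => exact .refl
  | @step f ss ls ρ γ t hρ hl hle _ _ _ ihargs ihrest =>
    have hargs : mkApp (.sym f) ss →[R]* mkApp (subst γ ρ.lhs) (ss.drop ls.length) := by
      rw [← List.take_append_drop ls.length ss, mkApp_append, List.drop_left' (by simp [hle]),
        hl, subst_mkApp]
      exact rtg_mkApp (rtg_mkApp .refl (List.forall₂_take_map hle ihargs))
        (List.forall₂_same.mpr fun _ _ => .refl)
    exact (hargs.tail ((Rew.root hρ).mkApp_left _)).trans ihrest

theorem SemiOut.of_head_step {ρ : Rule α} (hρ : ρ ∈ R) {f : α} {ls : List (Tm α)}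
    (hl : ρ.lhs = mkApp (.sym f) ls) {γ : ℕ → Tm α} {bs : List (Tm α)} {t : Tm α}
    (h : SemiOut R (mkApp (subst γ ρ.rhs) bs) t) : SemiOut R (mkApp (subst γ ρ.lhs) bs) t := by
  have hle : ls.length ≤ (ls.map (subst γ) ++ bs).length := by simp
  have hget : ∀ j (hj : j < ls.length),
      (ls.map (subst γ) ++ bs)[j]'(lt_of_lt_of_le hj hle) = subst γ ls[j] := by
    intro j hj
    simp [List.getElem_append_left, hj]
  rw [hl, subst_mkApp, ← mkApp_append]
  refine .step hρ hl hle (fun j hj => hget j hj ▸ .refl _) (fun j hj _ => hget j hj) ?_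
  simpa using h

end SemiOutBasics

def SemiOutFromSafePreds {α : Type} (S : Sig α) (R : Set (Rule α)) (B : Set (Tm α))
    (u t : Tm α) : Prop :=
  ∀ n s, ParRew R n s u → AppBSafe S B s → SemiOut R s t

section SemiOutermost
variable {α : Type} {S : Sig α} {R : Set (Rule α)} {B : Set (Tm α)}

theorem IsLinearConsFreeRule.pat_of_lhs_eq {ρ : Rule α} (hρ : IsLinearConsFreeRule S ρ) {f : α}
    {ls : List (Tm α)} (hl : ρ.lhs = mkApp (.sym f) ls) : ∀ p ∈ ls, Pat S p := by
  obtain ⟨g, ls', hl', -, hpat⟩ := hρ.lhsSpine.exists_eq_mkApp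
  obtain ⟨-, rfl⟩ := mkApp_sym_inj (hl.symm.trans hl')
  exact hpat

theorem IsLinearConsFreeRule.sum_count_le {ρ : Rule α} (hρ : IsLinearConsFreeRule S ρ) {f : α}
    {ls : List (Tm α)} (hl : ρ.lhs = mkApp (.sym f) ls) (x : ℕ) :
    (ls.map (Tm.count x)).sum ≤ 1 := by
  simpa [hl, count_mkApp, Tm.count] using hρ.linear x

theorem semiOutFromSafePreds_mkApp_sym (hR : ∀ ρ ∈ R, IsLinearConsFreeRule S ρ)
    (hGB : GoodB S R B) {f : α} {us : List (Tm α)} {t : Tm α}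
    (hcongr : ∀ ss, List.Forall₂ (fun a b => ∃ m, ParRew R m a b) ss us →
      AppBSafe S B (mkApp (.sym f) ss) → SemiOut R (mkApp (.sym f) ss) t) :
    SemiOutFromSafePreds S R B (mkApp (.sym f) us) t := by
  intro n
  induction n using Nat.strong_induction_on with
  | _ n ih =>
  intro s h hs
  rcases h.mkApp_sym_inv with ⟨ss, rfl, hss⟩ | ⟨ρ, hρ, γ, bs, m, hm, rfl, h'⟩
  · exact hcongr ss hss hs
  · obtain ⟨g, ls, hl, -, -⟩ := (hR ρ hρ).lhsSpine.exists_eq_mkApp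
    exact .of_head_step hρ hl (ih m hm _ h' (hs.rew hR hGB ((Rew.root hρ).mkApp_left bs)))

/-- The rule that the semi-outermost reduction applies to `f us` applies to `f ss` as well, once
its substitution is updated at the variable arguments of the left-hand side. -/
theorem semiOut_mkApp_sym_of_step (hR : ∀ ρ ∈ R, IsLinearConsFreeRule S ρ)
    (hGB : GoodB S R B) {f : α} {us ls : List (Tm α)} {ρ : Rule α} {γ : ℕ → Tm α}
    {t : Tm α} (hρ : ρ ∈ R) (hl : ρ.lhs = mkApp (.sym f) ls) (hle : ls.length ≤ us.length)
    (hargs : ∀ j (hj : j < ls.length), SemiOut R us[j] (subst γ ls[j]))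
    (ihargs : ∀ j (hj : j < ls.length), IsData S (subst γ ls[j]) →
      SemiOutFromSafePreds S R B us[j] (subst γ ls[j]))
    (hvar : ∀ j (hj : j < ls.length), (∃ x, ls[j] = .var x) → us[j] = subst γ ls[j])
    (ihrest : SemiOutFromSafePreds S R B (mkApp (subst γ ρ.rhs) (us.drop ls.length)) t)
    {ss : List (Tm α)} (hss : List.Forall₂ (fun a b => ∃ m, ParRew R m a b) ss us)
    (hs : AppBSafe S B (mkApp (.sym f) ss)) : SemiOut R (mkApp (.sym f) ss) t := by
  have hlen := hss.length_eq
  have hle' : ls.length ≤ ss.length := hlen ▸ hle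
  have hpar : ∀ j (hj : j < ls.length), ∃ m, ParRew R m ss[j] us[j] := fun j hj =>
    (List.forall₂_iff_get.mp hss).2 j (by omega) (by omega)
  have hsafe : ∀ j (hj : j < ls.length), AppBSafe S B ss[j] := fun j hj =>
    hs.mono (.strict (strSubtm_mkApp_of_mem (List.getElem_mem _)))
  obtain ⟨γ', hγ'var, hγ'other, hγ'pat⟩ :=
    exists_subst_of_linear ((hR ρ hρ).sum_count_le hl) hle' γ
  have hargs' : ∀ j (hj : j < ls.length), SemiOut R ss[j] (subst γ' ls[j]) := by
    intro j hj
    by_cases hv : ∃ x, ls[j] = .var x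
    · obtain ⟨x, hx⟩ := hv
      rw [hx, subst, hγ'var j hj x hx]
      exact .refl _
    · push Not at hv
      rw [hγ'pat j hj hv]
      obtain ⟨m, hm⟩ := hpar j hj
      have hd : IsData S (subst γ ls[j]) :=
        ((hR ρ hρ).pat_of_lhs_eq hl _ (List.getElem_mem hj)).isData_subst hGB hv
          ((hsafe j hj).rtg hR hGB (hm.rtg.trans (hargs j hj).rtg))
      exact ihargs j hj hd m _ hm (hsafe j hj)
  have hvar' : ∀ j (hj : j < ls.length), (∃ x, ls[j] = .var x) → ss[j] = subst γ' ls[j] := by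
    rintro j hj ⟨x, hx⟩
    rw [hx, subst, hγ'var j hj x hx]
  have hsub : ∀ x, ∃ m, ParRew R m (γ' x) (γ x) := by
    intro x
    by_cases hx : ∃ j, ∃ hj : j < ls.length, ls[j] = .var x
    · obtain ⟨j, hj, hx⟩ := hx
      have hγx : γ x = us[j] := by rw [hvar j hj ⟨x, hx⟩, hx]; rfl
      rw [hγ'var j hj x hx, hγx]
      exact hpar j hj
    · push Not at hx
      rw [hγ'other x hx]
      exact ⟨0, .refl _⟩
  choose w hw using hsub
  obtain ⟨n, hn⟩ :=
    (ParRew.congr_subst hw ρ.rhs).mkApp_congr (List.forall₂_drop ls.length hss)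
  have hhead := SemiOut.step hρ hl hle' hargs' hvar' (.refl _)
  exact .step hρ hl hle' hargs' hvar' (ihrest n _ hn (hs.rtg hR hGB hhead.rtg))

theorem SemiOut.semiOutFromSafePreds (hR : ∀ ρ ∈ R, IsLinearConsFreeRule S ρ)
    (hGB : GoodB S R B) {u t : Tm α} (h : SemiOut R u t) (ht : IsData S t) :
    SemiOutFromSafePreds S R B u t := by
  induction h with
  | refl u =>
    obtain ⟨c, hc, hcons⟩ := ht.consHead
    obtain ⟨us, rfl⟩ := Tm.exists_eq_mkApp_sym hc
    refine semiOutFromSafePreds_mkApp_sym hR hGB fun ss hss hs => ?_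
    have hrtg := rtg_mkApp (Relation.ReflTransGen.refl (a := Tm.sym c))
      (hss.imp fun _ _ ⟨_, h⟩ => h.rtg)
    rw [hs.eq_of_rtg_isData hR hGB ⟨c, headSym_mkApp _ _, hcons⟩ hrtg ht]
    exact .refl _
  | step hρ hl hle hargs hvar _ ihargs ihrest =>
    exact semiOutFromSafePreds_mkApp_sym hR hGB fun ss hss hs =>
      semiOut_mkApp_sym_of_step hR hGB hρ hl hle hargs ihargs hvar (ihrest ht) hss hs

theorem semiOut_of_rtg (hR : ∀ ρ ∈ R, IsLinearConsFreeRule S ρ)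
    (hGB : GoodB S R B) {s t : Tm α} (hs : AppBSafe S B s) (ht : IsData S t)
    (hst : s →[R]* t) : SemiOut R s t := by
  induction hst using Relation.ReflTransGen.head_induction_on with
  | refl => exact .refl _
  | head hsb _ ih =>
    obtain ⟨n, hn⟩ := hsb.exists_parRew
    exact (ih (hs.rew hR hGB hsb)).semiOutFromSafePreds hR hGB ht n _ hn hs

end SemiOutermost

section Labels
variable {α : Type} {S : Sig α}

theorem count_labelTm (i x : ℕ) (w : Tm α) : (labelTm S i w).count x = w.count x := by
  induction w with
  | sym f => rfl
  | var y => rfl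
  | app a b iha ihb => simp [labelTm, Tm.count, iha, ihb]

theorem vars_labelTm (i : ℕ) (w : Tm α) : (labelTm S i w).vars = w.vars := by
  induction w with
  | sym f => rfl
  | var y => rfl
  | app a b iha ihb => simp [labelTm, Tm.vars, iha, ihb]

theorem ground_labelTm (i : ℕ) (w : Tm α) : (labelTm S i w).ground ↔ w.ground := by
  induction w with
  | sym f => simp [labelTm, Tm.ground]
  | var y => simp [labelTm, Tm.ground]
  | app a b iha ihb => simp [labelTm, Tm.ground, iha, ihb]

theorem ConsHead.of_labelTm {i : ℕ} {w : Tm α} (h : ConsHead (SigLab S) (labelTm S i w)) :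
    ConsHead S w := by
  obtain ⟨c, hc, hcons⟩ := h
  induction w with
  | sym f => cases hc; exact ⟨f, rfl, hcons⟩
  | var y => cases hc
  | app a b iha _ => exact iha hc

theorem HasTy.labelTm (i : ℕ) {w : Tm α} {σ : Ty} (h : HasTy S w σ) :
    HasTy (SigLab S) (labelTm S i w) σ := by
  induction h with
  | sym f => exact .sym (S := SigLab S) _
  | var x => exact .var (S := SigLab S) x
  | app _ _ ih₁ ih₂ => exact .app ih₁ ih₂

theorem pat_labelTm (i : ℕ) (p : Tm α) :
    (PatSpine S p →
      PatSpine (SigLab S) (labelTm S i p) ∧ ∀ j, labelTm S j p = labelTm S i p) ∧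
    (Pat S p → Pat (SigLab S) (labelTm S i p) ∧ ∀ j, labelTm S j p = labelTm S i p) := by
  induction p with
  | sym f =>
    have hspine : PatSpine S (.sym f) → PatSpine (SigLab S) (labelTm S i (.sym f)) ∧
        ∀ j, labelTm S j (.sym f) = labelTm S i (.sym f) := by
      intro h
      cases h with
      | head hc => exact ⟨.head (by exact hc), fun j => by simp [labelTm, hc]⟩
    refine ⟨hspine, fun h => ?_⟩
    cases h with
    | cons hs hty =>
      obtain ⟨k, hk⟩ := hty
      exact ⟨.cons (hspine hs).1 ⟨k, hk.labelTm i⟩, (hspine hs).2⟩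
  | var y => exact ⟨fun h => (by cases h), fun _ => ⟨.var y, fun _ => rfl⟩⟩
  | app a b iha ihb =>
    have hspine : PatSpine S (.app a b) → PatSpine (SigLab S) (labelTm S i (.app a b)) ∧
        ∀ j, labelTm S j (.app a b) = labelTm S i (.app a b) := by
      intro h
      cases h with
      | app ha hb =>
        exact ⟨.app (iha.1 ha).1 (ihb.2 hb).1, fun j => by
          simp only [labelTm, (iha.1 ha).2 j, (ihb.2 hb).2 j]⟩
    refine ⟨hspine, fun h => ?_⟩
    cases h with
    | cons hs hty =>
      obtain ⟨k, hk⟩ := hty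
      exact ⟨.cons (hspine hs).1 ⟨k, hk.labelTm i⟩, (hspine hs).2⟩

theorem IsData.labelTm (i : ℕ) {w : Tm α} (h : IsData S w) : IsData (SigLab S) (labelTm S i w) :=
  ⟨((pat_labelTm i w).2 h.1).1, (ground_labelTm i w).mpr h.2⟩

theorem pat_of_strSubtm_patSpine {w p : Tm α} :
    (StrSubtm w p → PatSpine S p → Pat S w) ∧ (Subtm w p → Pat S p → Pat S w) := by
  induction p with
  | sym f => exact ⟨fun h => (by cases h), fun h hp => by rwa [eq_of_subtm_sym h]⟩
  | var y => exact ⟨fun h => (by cases h), fun h hp => by rwa [eq_of_subtm_var h]⟩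
  | app a b iha ihb =>
    have hstr : StrSubtm w (.app a b) → PatSpine S (.app a b) → Pat S w := by
      intro h hp
      cases hp with
      | app ha hb =>
        cases h with
        | left h => exact iha.1 h ha
        | right h => exact ihb.2 h hb
    refine ⟨hstr, fun h hp => ?_⟩
    cases h with
    | refl => exact hp
    | strict h => cases hp with | cons hs _ => exact hstr h hs

theorem Pat.of_subtm {w p : Tm α} (hp : Pat S p) (h : Subtm w p) : Pat S w :=
  pat_of_strSubtm_patSpine.2 h hp

theorem strSubtm_labelTm (i : ℕ) {a b : Tm α} :
    (StrSubtm a b → StrSubtm (labelTm S i a) (labelTm S i b)) ∧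
    (Subtm a b → Subtm (labelTm S i a) (labelTm S i b)) := by
  induction b with
  | sym f => exact ⟨fun h => (by cases h), fun h => by rw [eq_of_subtm_sym h]; exact .refl _⟩
  | var y => exact ⟨fun h => (by cases h), fun h => by rw [eq_of_subtm_var h]; exact .refl _⟩
  | app s u ihs ihu =>
    have hstr : StrSubtm a (.app s u) → StrSubtm (labelTm S i a) (labelTm S i (.app s u)) := by
      intro h
      cases h with
      | left h => exact .left (ihs.1 h)
      | right h => exact .right (ihu.2 h)
    refine ⟨hstr, fun h => ?_⟩
    cases h with
    | refl => exact .refl _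
    | strict h => exact .strict (hstr h)

theorem exists_labelTm_of_subtm (i : ℕ) {r : Tm α} {w : Tm (α × ℕ)}
    (hw : Subtm w (labelTm S i r)) : ∃ w₀, Subtm w₀ r ∧ w = labelTm S i w₀ := by
  induction r generalizing w with
  | sym f => exact ⟨.sym f, .refl _, eq_of_subtm_sym hw⟩
  | var y => exact ⟨.var y, .refl _, eq_of_subtm_var hw⟩
  | app r₁ r₂ ih₁ ih₂ =>
    cases hw with
    | refl => exact ⟨.app r₁ r₂, .refl _, rfl⟩
    | strict hstr =>
      cases hstr with
      | left h =>
        obtain ⟨w₀, hsub, rfl⟩ := ih₁ (.strict h)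
        cases hsub with
        | refl => exact (StrSubtm.irrefl _ h).elim
        | strict h' => exact ⟨w₀, .strict (.left h'), rfl⟩
      | right h =>
        obtain ⟨w₀, hsub, rfl⟩ := ih₂ h
        exact ⟨w₀, .strict (.right hsub), rfl⟩

theorem LhsSpine.labelTm (i : ℕ) {l : Tm α} (h : LhsSpine S l) :
    LhsSpine (SigLab S) (labelTm S i l) := by
  induction h with
  | @head f hf => simpa [_root_.labelTm, hf] using LhsSpine.head (S := SigLab S) (f := (f, i)) hf
  | @app s p _ hp ih => exact .app ih ((pat_labelTm i p).2 hp).1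

theorem GoodRule.isLinearConsFreeRule_label {ρ : Rule α} (hρ : GoodRule S ρ) (i : ℕ) :
    IsLinearConsFreeRule (SigLab S) ⟨labelTm S (i + 1) ρ.lhs, labelTm S i ρ.rhs⟩ := by
  obtain ⟨hspine, hlin, hvars, -, hcf⟩ := hρ
  refine ⟨hspine.labelTm (i + 1), fun x => (count_labelTm _ x _).trans_le (hlin x), ?_, ?_⟩
  · simpa only [vars_labelTm] using hvars
  · intro w hw hc
    obtain ⟨w₀, hw₀, rfl⟩ := exists_labelTm_of_subtm i hw
    rcases hcf w₀ hw₀ hc.of_labelTm with hd | hstr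
    · exact .inl (hd.labelTm i)
    · obtain ⟨f, ls, hl, -, hls⟩ := hspine.exists_eq_mkApp
      obtain ⟨p, hp, hw₀p⟩ :=
        (strSubtm_mkApp_inv (hl ▸ hstr)).resolve_left (by rintro ⟨⟩)
      refine .inr ?_
      show StrSubtm (labelTm S i w₀) (labelTm S (i + 1) ρ.lhs)
      rw [← ((pat_labelTm i w₀).2 ((hls p hp).of_subtm hw₀p)).2 (i + 1)]
      exact (strSubtm_labelTm (i + 1)).1 hstr

theorem isLinearConsFreeRule_RLab {R : Set (Rule α)} (hR : ∀ ρ ∈ R, GoodRule S ρ) :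
    ∀ ρ' ∈ RLab S R, IsLinearConsFreeRule (SigLab S) ρ' := by
  rintro ρ' (⟨f, i, hf, rfl⟩ | ⟨ρ, hρ, i, rfl⟩)
  · refine ⟨.head hf, fun x => by simp [Tm.count], fun x hx => (by cases hx), ?_⟩
    rintro w hw ⟨c, hc, hcons⟩
    cases eq_of_subtm_sym hw
    cases hc
    exact (hf hcons).elim
  · exact (hR ρ hρ).isLinearConsFreeRule_label i

end Labels

/-- In the labeled cons-free system, any reduction from a `B`-safe term to a
data term can be replaced by a semi-outermost reduction. -/
theorem semi_outermost_exists {α : Type} (S : Sig α) (R : Set (Rule α))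
    (B : Set (Tm (α × ℕ)))
    (hR : ∀ ρ ∈ R, GoodRule S ρ)
    (hB : GoodB (SigLab S) (RLab S R) B)
    (s t : Tm (α × ℕ))
    (hs : BSafe (SigLab S) B s) (ht : IsData (SigLab S) t)
    (hst : Relation.ReflTransGen (Rew (RLab S R)) s t) :
    SemiOut (RLab S R) s t :=
  semiOut_of_rtg (isLinearConsFreeRule_RLab hR) hB hs.appBSafe ht hst
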